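/- arXiv:2604.00133 — 6 statements merged into one kernel-verified Lean document; each statement's English description precedes it below -/
import Mathlib

section
/- Under randomization, consistency, and monotonicity, E[Y(1) | S(0)=1, S(1)=1] = E[Y | Z=1, S=1], provided P(Z=1, S(1)=1) > 0. -/
open MeasureTheory ProbabilityTheory

/-- Probability of an event as a real number. -/
noncomputable def Pr {Ω : Type*} [MeasurableSpace Ω] (μ : Measure Ω) (A : Set Ω) : ℝ :=
  (μ A).toReal

/-- Conditional expectation of `Y` given the event `A` (as a ratio). -/
noncomputable def cexp {Ω : Type*} [MeasurableSpace Ω] (μ : Measure Ω) (Y : Ω → ℝ)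
    (A : Set Ω) : ℝ :=
  (∫ ω in A, Y ω ∂μ) / Pr μ A

/-! Consistency turns the event `{Z = 1, S = 1}` into `{Z = 1} ∩ {S(1) = 1}`, on which `Y = Y(1)`.
Since `Z` is independent of `(S(1), Y(1))`, intersecting with `{Z = 1}` scales numerator and
denominator of the conditional mean by the same factor `P(Z = 1)`. Finally, monotonicity and
`S(0) ≤ 1` make `{S(1) = 1}` and `{S(0) = 1, S(1) = 1}` agree almost surely. -/

section

variable {Ω β γ : Type*} [MeasurableSpace Ω] [MeasurableSpace β] [MeasurableSpace γ]
  {μ : Measure Ω}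

theorem cexp_congr_set {X : Ω → ℝ} {s t : Set Ω} (h : s =ᵐ[μ] t) :
    cexp μ X s = cexp μ X t := by
  rw [cexp, cexp, Pr, Pr, setIntegral_congr_set h, measure_congr h]

theorem cexp_congr_fun {X X' : Ω → ℝ} {s : Set Ω} (hs : MeasurableSet s) (h : Set.EqOn X X' s) :
    cexp μ X s = cexp μ X' s := by
  rw [cexp, cexp, setIntegral_congr_fun hs h]

theorem setOf_eq_and_eq_ae_eq_of_le {α : Type*} [PartialOrder α] {X X' : Ω → α} {a : α}
    (hXa : ∀ᵐ ω ∂μ, X ω ≤ a) (hle : ∀ᵐ ω ∂μ, X' ω ≤ X ω) :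
    {ω | X ω = a ∧ X' ω = a} =ᵐ[μ] {ω | X' ω = a} := by
  filter_upwards [hXa, hle] with ω hXa hle
  exact propext ⟨And.right, fun h => ⟨le_antisymm hXa (h ▸ hle), h⟩⟩

namespace ProbabilityTheory.IndepFun

variable {f : Ω → β} {g : Ω → γ} {φ : γ → ℝ} {A : Set β} {B : Set γ}

theorem setIntegral_preimage_inter (hfg : IndepFun f g μ) (hf : Measurable f)
    (hg : Measurable g) (hφ : Measurable φ) (hA : MeasurableSet A) (hB : MeasurableSet B) :
    ∫ ω in f ⁻¹' A ∩ g ⁻¹' B, φ (g ω) ∂μ = μ.real (f ⁻¹' A) * ∫ ω in g ⁻¹' B, φ (g ω) ∂μ := by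
  have key := ((IndepFun_iff_Indep f g μ).1 hfg).setIntegral_eq_mul hf.comap_le hg.aemeasurable
    ⟨A, hA, rfl⟩ (hφ.indicator hB).aestronglyMeasurable
  simp only [← Set.indicator_comp_right] at key
  rwa [setIntegral_indicator (hg hB), integral_indicator (hg hB)] at key

theorem cexp_preimage_inter (hfg : IndepFun f g μ) (hf : Measurable f)
    (hg : Measurable g) (hφ : Measurable φ) (hA : MeasurableSet A) (hB : MeasurableSet B)
    (hpos : Pr μ (f ⁻¹' A ∩ g ⁻¹' B) ≠ 0) :
    cexp μ (fun ω => φ (g ω)) (f ⁻¹' A ∩ g ⁻¹' B) = cexp μ (fun ω => φ (g ω)) (g ⁻¹' B) := by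
  have hmul : Pr μ (f ⁻¹' A ∩ g ⁻¹' B) = μ.real (f ⁻¹' A) * Pr μ (g ⁻¹' B) := by
    rw [Pr, Pr, hfg.measure_inter_preimage_eq_mul A B hA hB, ENNReal.toReal_mul, measureReal_def]
  rw [cexp, cexp, hfg.setIntegral_preimage_inter hf hg hφ hA hB, hmul]
  rw [hmul] at hpos
  exact mul_div_mul_left _ _ (left_ne_zero_of_mul hpos)

end ProbabilityTheory.IndepFun

end

theorem id_EY1_doomed_general
    {Ω : Type*} [MeasurableSpace Ω] (μ : Measure Ω)
    (Z S0 S1 Y0 Y1 S Y : Ω → ℝ)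
    (hZm : Measurable Z) (hS1m : Measurable S1)
    (hY1m : Measurable Y1)
    (hS0 : ∀ ω, S0 ω = 0 ∨ S0 ω = 1)
    (hindep : IndepFun Z (fun ω => (S0 ω, S1 ω, Y0 ω, Y1 ω)) μ)
    (hconsS : ∀ ω, S ω = if Z ω = 1 then S1 ω else S0 ω)
    (hconsY : ∀ ω, Y ω = if Z ω = 1 then Y1 ω else Y0 ω)
    (hmono : ∀ᵐ ω ∂μ, S1 ω ≤ S0 ω)
    (hpos : 0 < Pr μ {ω | Z ω = 1 ∧ S1 ω = 1}) :
    cexp μ Y1 {ω | S0 ω = 1 ∧ S1 ω = 1} = cexp μ Y {ω | Z ω = 1 ∧ S ω = 1} := by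
  set T : Ω → ℝ × ℝ := fun ω => (S1 ω, Y1 ω)
  have hT : IndepFun Z T μ :=
    hindep.comp (φ := id) (ψ := fun p : ℝ × ℝ × ℝ × ℝ => (p.2.1, p.2.2.2)) measurable_id
      (by fun_prop)
  have hB : MeasurableSet {p : ℝ × ℝ | p.1 = 1} := measurable_fst (measurableSet_singleton 1)
  have hevent : {ω | Z ω = 1 ∧ S ω = 1} = Z ⁻¹' {1} ∩ T ⁻¹' {p | p.1 = 1} := by
    ext ω
    simp +contextual [T, hconsS, and_congr_right_iff]
  have hS0le : ∀ᵐ ω ∂μ, S0 ω ≤ 1 :=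
    ae_of_all μ fun ω => (hS0 ω).elim (fun h => h ▸ zero_le_one) le_of_eq
  calc cexp μ Y1 {ω | S0 ω = 1 ∧ S1 ω = 1}
      = cexp μ (fun ω => (T ω).2) (T ⁻¹' {p | p.1 = 1}) :=
        cexp_congr_set (setOf_eq_and_eq_ae_eq_of_le hS0le hmono)
    _ = cexp μ Y1 (Z ⁻¹' {1} ∩ T ⁻¹' {p | p.1 = 1}) :=
        (hT.cexp_preimage_inter hZm (by fun_prop) measurable_snd (measurableSet_singleton 1) hB
          hpos.ne').symm
    _ = cexp μ Y (Z ⁻¹' {1} ∩ T ⁻¹' {p | p.1 = 1}) :=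
        cexp_congr_fun (hZm (measurableSet_singleton 1) |>.inter (hB.preimage (by fun_prop)))
          fun ω hω => by simp [hconsY, show Z ω = 1 from hω.1]
    _ = cexp μ Y {ω | Z ω = 1 ∧ S ω = 1} := by rw [hevent]

/-- Identification of the Doomed-stratum mean under vaccine:
`E[Y(1) | S(0)=1, S(1)=1] = E[Y | Z=1, S=1]`. -/
theorem id_EY1_doomed
    {Ω : Type*} [MeasurableSpace Ω] (μ : Measure Ω) [IsProbabilityMeasure μ]
    (Z S0 S1 Y0 Y1 S Y : Ω → ℝ)
    (hZm : Measurable Z) (hS0m : Measurable S0) (hS1m : Measurable S1)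
    (hY0m : Measurable Y0) (hY1m : Measurable Y1)
    (hZ : ∀ ω, Z ω = 0 ∨ Z ω = 1)
    (hS0 : ∀ ω, S0 ω = 0 ∨ S0 ω = 1) (hS1 : ∀ ω, S1 ω = 0 ∨ S1 ω = 1)
    (hindep : IndepFun Z (fun ω => (S0 ω, S1 ω, Y0 ω, Y1 ω)) μ)
    (hconsS : ∀ ω, S ω = if Z ω = 1 then S1 ω else S0 ω)
    (hconsY : ∀ ω, Y ω = if Z ω = 1 then Y1 ω else Y0 ω)
    (hmono : ∀ᵐ ω ∂μ, S1 ω ≤ S0 ω)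
    (hint : Integrable Y1 μ)
    (hpos : 0 < Pr μ {ω | Z ω = 1 ∧ S1 ω = 1}) :
    cexp μ Y1 {ω | S0 ω = 1 ∧ S1 ω = 1} = cexp μ Y {ω | Z ω = 1 ∧ S ω = 1} :=
  id_EY1_doomed_general μ Z S0 S1 Y0 Y1 S Y hZm hS1m hY1m hS0 hindep hconsS hconsY hmono hpos
end

section
/- Under randomization, consistency, and monotonicity, with ρ̄_z = P(S=1 | Z=z) and ρ̄_0 > 0, the decomposition E[Y(1) | S(0)=1] = E[Y | Z=1, S=1]·(ρ̄_1/ρ̄_0) + E[Y(1) | S(0)=1, S(1)=0]·(1 − ρ̄_1/ρ̄_0) holds, provided P(S(0)=1, S(1)=0) > 0 and P(S=1, Z=1) > 0. -/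
/-!
Randomization identifies `ρ̄_z` with `P(S(z) = 1)` and the observed stratum `{Z = 1, S = 1}`
with `{S(1) = 1}`, on which `Y = Y(1)`; hence `E[Y | Z = 1, S = 1] = E[Y(1) | S(1) = 1]`.
By monotonicity, `{S(0) = 1}` is almost surely the disjoint union of `{S(1) = 1}` and
`{S(0) = 1, S(1) = 0}`, so `E[Y(1) | S(0) = 1]` is the mixture of the two stratum means with
weights `P(S(1) = 1) / P(S(0) = 1) = ρ̄_1 / ρ̄_0` and its complement.
-/

open MeasureTheory ProbabilityTheory

section

variable {Ω β γ : Type*} [MeasurableSpace Ω] [MeasurableSpace β] [MeasurableSpace γ]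
  {μ : Measure Ω}

-- Holds also when `Pr μ A = 0` (junk value `cexp μ Y A = 0`), since `A` is then null.
lemma setIntegral_eq_cexp_mul_Pr [IsFiniteMeasure μ] (Y : Ω → ℝ) (A : Set Ω) :
    ∫ ω in A, Y ω ∂μ = cexp μ Y A * Pr μ A := by
  by_cases hA : Pr μ A = 0
  · have hμA : μ A = 0 :=
      ((ENNReal.toReal_eq_zero_iff _).1 hA).resolve_right (measure_ne_top μ A)
    simp [hA, Measure.restrict_eq_zero.2 hμA]
  · rw [cexp, div_mul_cancel₀ _ hA]

lemma cexp_eq_of_ae_eq_union [IsFiniteMeasure μ] {Y : Ω → ℝ} {s t u : Set Ω}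
    (hs : s =ᵐ[μ] (t ∪ u : Set Ω)) (htu : Disjoint t u) (ht : MeasurableSet t)
    (hY : IntegrableOn Y s μ) (hs0 : Pr μ s ≠ 0) :
    cexp μ Y s = cexp μ Y t * (Pr μ t / Pr μ s) + cexp μ Y u * (1 - Pr μ t / Pr μ s) := by
  have hYtu : IntegrableOn Y (u ∪ t) μ := by
    rw [Set.union_comm]; exact hY.congr_set_ae hs.symm
  have hPr : Pr μ s = Pr μ t + Pr μ u := by
    rw [Pr, measure_congr hs, measure_union' htu ht,
      ENNReal.toReal_add (measure_ne_top μ t) (measure_ne_top μ u), Pr, Pr]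
  have hint : ∫ ω in s, Y ω ∂μ = (∫ ω in t, Y ω ∂μ) + ∫ ω in u, Y ω ∂μ := by
    rw [setIntegral_congr_set hs, Set.union_comm,
      setIntegral_union htu.symm ht hYtu.left_of_union hYtu.right_of_union, add_comm]
  rw [cexp, hint, setIntegral_eq_cexp_mul_Pr Y t, setIntegral_eq_cexp_mul_Pr Y u, hPr]
  rw [hPr] at hs0
  field_simp
  ring

lemma Pr_inter_preimage_eq_mul {Z : Ω → β} {V : Ω → γ} (hZV : IndepFun Z V μ)
    {A : Set β} {T : Set γ} (hA : MeasurableSet A) (hT : MeasurableSet T) :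
    Pr μ (Z ⁻¹' A ∩ V ⁻¹' T) = Pr μ (Z ⁻¹' A) * Pr μ (V ⁻¹' T) := by
  rw [Pr, hZV.measure_inter_preimage_eq_mul A T hA hT, ENNReal.toReal_mul, Pr, Pr]

lemma Pr_inter_preimage_div_eq {Z : Ω → β} {V : Ω → γ} (hZV : IndepFun Z V μ)
    {A : Set β} {T : Set γ} (hA : MeasurableSet A) (hT : MeasurableSet T)
    (hZA : Pr μ (Z ⁻¹' A) ≠ 0) :
    Pr μ (Z ⁻¹' A ∩ V ⁻¹' T) / Pr μ (Z ⁻¹' A) = Pr μ (V ⁻¹' T) := by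
  rw [Pr_inter_preimage_eq_mul hZV hA hT, mul_div_cancel_left₀ _ hZA]

lemma setIntegral_inter_preimage_eq_mul {Z : Ω → β} {V : Ω → γ} {Y : Ω → ℝ}
    (hZVY : IndepFun Z (fun ω => (V ω, Y ω)) μ) (hZ : Measurable Z) (hV : Measurable V)
    (hY : AEMeasurable Y μ) {A : Set β} {T : Set γ} (hA : MeasurableSet A)
    (hT : MeasurableSet T) :
    ∫ ω in Z ⁻¹' A ∩ V ⁻¹' T, Y ω ∂μ = Pr μ (Z ⁻¹' A) * ∫ ω in V ⁻¹' T, Y ω ∂μ := by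
  have hf : Measurable ((Prod.fst ⁻¹' T).indicator (Prod.snd : γ × ℝ → ℝ)) :=
    measurable_snd.indicator (measurable_fst hT)
  have h : ∫ ω in Z ⁻¹' A, (V ⁻¹' T).indicator Y ω ∂μ
      = μ.real (Z ⁻¹' A) * ∫ ω, (V ⁻¹' T).indicator Y ω ∂μ :=
    ((IndepFun_iff_Indep _ _ _).1 hZVY).setIntegral_eq_mul hZ.comap_le
      (hV.aemeasurable.prodMk hY) ⟨A, hA, rfl⟩ hf.aestronglyMeasurable
  rwa [setIntegral_indicator (hV hT), integral_indicator (hV hT)] at h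

end

lemma setOf_eq_one_and_eq_one_eq_inter {Ω : Type*} {Z S S0 S1 : Ω → ℝ}
    (hS : ∀ ω, S ω = if Z ω = 1 then S1 ω else S0 ω) :
    {ω | S ω = 1 ∧ Z ω = 1} = Z ⁻¹' {1} ∩ S1 ⁻¹' {1} := by
  ext ω
  by_cases hZ : Z ω = 1 <;> simp [hS, hZ, and_comm]

lemma setOf_eq_one_and_eq_zero_eq_inter {Ω : Type*} {Z S S0 S1 : Ω → ℝ}
    (hS : ∀ ω, S ω = if Z ω = 1 then S1 ω else S0 ω) :
    {ω | S ω = 1 ∧ Z ω = 0} = Z ⁻¹' {0} ∩ S0 ⁻¹' {1} := by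
  ext ω
  by_cases hZ : Z ω = 0 <;> simp [hS, hZ, and_comm]

lemma setOf_eq_one_ae_eq_union_of_ae_le {Ω : Type*} [MeasurableSpace Ω] {μ : Measure Ω}
    {S0 S1 : Ω → ℝ} (hS0 : ∀ ω, S0 ω = 0 ∨ S0 ω = 1) (hS1 : ∀ ω, S1 ω = 0 ∨ S1 ω = 1)
    (hle : ∀ᵐ ω ∂μ, S1 ω ≤ S0 ω) :
    S0 ⁻¹' {1} =ᵐ[μ] (S1 ⁻¹' {1} ∪ {ω | S0 ω = 1 ∧ S1 ω = 0} : Set Ω) := by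
  rw [Filter.eventuallyEq_set]
  filter_upwards [hle] with ω hω
  rcases hS0 ω with h0 | h0 <;> rcases hS1 ω with h1 | h1 <;> simp [h0, h1] at hω ⊢
  norm_num at hω

theorem partial_id_decomposition_general
    {Ω : Type*} [MeasurableSpace Ω] (μ : Measure Ω) [IsProbabilityMeasure μ]
    (Z S0 S1 Y1 S Y : Ω → ℝ) (ρ0 ρ1 : ℝ)
    (hZm : Measurable Z) (hS1m : Measurable S1)
    (hS0 : ∀ ω, S0 ω = 0 ∨ S0 ω = 1) (hS1 : ∀ ω, S1 ω = 0 ∨ S1 ω = 1)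
    (hindep : IndepFun Z (fun ω => (S0 ω, S1 ω, Y1 ω)) μ)
    (hconsS : ∀ ω, S ω = if Z ω = 1 then S1 ω else S0 ω)
    (hconsY : ∀ ω, Z ω = 1 → Y ω = Y1 ω)
    (hmono : ∀ᵐ ω ∂μ, S1 ω ≤ S0 ω)
    (hint : Integrable Y1 μ)
    (hρ0 : ρ0 = Pr μ {ω | S ω = 1 ∧ Z ω = 0} / Pr μ {ω | Z ω = 0})
    (hρ1 : ρ1 = Pr μ {ω | S ω = 1 ∧ Z ω = 1} / Pr μ {ω | Z ω = 1})
    (hpos1 : 0 < Pr μ {ω | Z ω = 1})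
    (hρ0pos : 0 < ρ0) :
    cexp μ Y1 {ω | S0 ω = 1}
      = cexp μ Y {ω | Z ω = 1 ∧ S ω = 1} * (ρ1 / ρ0)
        + cexp μ Y1 {ω | S0 ω = 1 ∧ S1 ω = 0} * (1 - ρ1 / ρ0) := by
  have hZS0 : IndepFun Z S0 μ := hindep.comp measurable_id measurable_fst
  have hZS1 : IndepFun Z S1 μ := hindep.comp measurable_id (measurable_fst.comp measurable_snd)
  have hZSY : IndepFun Z (fun ω => (S1 ω, Y1 ω)) μ := hindep.comp measurable_id measurable_snd
  have hm1 : MeasurableSet ({1} : Set ℝ) := measurableSet_singleton 1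
  have hZ1 : Pr μ (Z ⁻¹' {1}) ≠ 0 := hpos1.ne'
  have hD : {ω | Z ω = 1 ∧ S ω = 1} = Z ⁻¹' {1} ∩ S1 ⁻¹' {1} :=
    (Set.ext fun _ => and_comm).trans (setOf_eq_one_and_eq_one_eq_inter hconsS)
  have hρ1' : ρ1 = Pr μ (S1 ⁻¹' {1}) := by
    rw [hρ1, setOf_eq_one_and_eq_one_eq_inter hconsS]
    exact Pr_inter_preimage_div_eq hZS1 hm1 hm1 hZ1
  have hρ0' : ρ0 = Pr μ (S0 ⁻¹' {1}) := by
    -- `ρ0 > 0` rules out the junk value `x / 0 = 0`.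
    have hZ0 : Pr μ (Z ⁻¹' {0}) ≠ 0 := fun h => by
      rw [show Pr μ {ω | Z ω = 0} = 0 from h, div_zero] at hρ0; linarith
    rw [hρ0, setOf_eq_one_and_eq_zero_eq_inter hconsS]
    exact Pr_inter_preimage_div_eq hZS0 (measurableSet_singleton 0) hm1 hZ0
  have hcexpD : cexp μ Y {ω | Z ω = 1 ∧ S ω = 1} = cexp μ Y1 (S1 ⁻¹' {1}) := by
    rw [cexp, cexp, hD,
      setIntegral_congr_fun ((hZm hm1).inter (hS1m hm1)) fun ω hω => hconsY ω hω.1,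
      setIntegral_inter_preimage_eq_mul hZSY hZm hS1m hint.aemeasurable hm1 hm1,
      Pr_inter_preimage_eq_mul hZS1 hm1 hm1, mul_div_mul_left _ _ hZ1]
  rw [hcexpD, hρ1', hρ0']
  exact cexp_eq_of_ae_eq_union (setOf_eq_one_ae_eq_union_of_ae_le hS0 hS1 hmono)
    (Set.disjoint_left.2 fun ω h1 h2 => by simp_all) (hS1m hm1) hint.integrableOn
    (hρ0' ▸ hρ0pos).ne'

/-- Decomposition of the Naturally Infected mean under vaccine into Doomed and Protected
components. -/
theorem partial_id_decomposition
    {Ω : Type*} [MeasurableSpace Ω] (μ : Measure Ω) [IsProbabilityMeasure μ]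
    (Z S0 S1 Y1 S Y : Ω → ℝ) (ρ0 ρ1 : ℝ)
    (hZm : Measurable Z) (hS0m : Measurable S0) (hS1m : Measurable S1)
    (hY1m : Measurable Y1)
    (hZ : ∀ ω, Z ω = 0 ∨ Z ω = 1)
    (hS0 : ∀ ω, S0 ω = 0 ∨ S0 ω = 1) (hS1 : ∀ ω, S1 ω = 0 ∨ S1 ω = 1)
    (hindep : IndepFun Z (fun ω => (S0 ω, S1 ω, Y1 ω)) μ)
    (hconsS : ∀ ω, S ω = if Z ω = 1 then S1 ω else S0 ω)
    (hconsY : ∀ ω, Z ω = 1 → Y ω = Y1 ω)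
    (hmono : ∀ᵐ ω ∂μ, S1 ω ≤ S0 ω)
    (hint : Integrable Y1 μ)
    (hρ0 : ρ0 = Pr μ {ω | S ω = 1 ∧ Z ω = 0} / Pr μ {ω | Z ω = 0})
    (hρ1 : ρ1 = Pr μ {ω | S ω = 1 ∧ Z ω = 1} / Pr μ {ω | Z ω = 1})
    (hpos0 : 0 < Pr μ {ω | Z ω = 0}) (hpos1 : 0 < Pr μ {ω | Z ω = 1})
    (hρ0pos : 0 < ρ0) (hlt : ρ1 < ρ0)
    (hposP : 0 < Pr μ {ω | S0 ω = 1 ∧ S1 ω = 0})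
    (hposD : 0 < Pr μ {ω | S ω = 1 ∧ Z ω = 1}) :
    cexp μ Y1 {ω | S0 ω = 1}
      = cexp μ Y {ω | Z ω = 1 ∧ S ω = 1} * (ρ1 / ρ0)
        + cexp μ Y1 {ω | S0 ω = 1 ∧ S1 ω = 0} * (1 - ρ1 / ρ0) :=
  partial_id_decomposition_general μ Z S0 S1 Y1 S Y ρ0 ρ1 hZm hS1m hS0 hS1 hindep hconsS hconsY
    hmono hint hρ0 hρ1 hpos1 hρ0pos
end

section
/- Suppose a random variable W is a mixture: the conditional law of W given membership in a population equals q·(law of W in subgroup A) + (1−q)·(law of W in subgroup B), with 0 < q < 1, and W has a continuous distribution (no atoms). Let y_ℓ and y_u be the q-th and (1−q)-th quantiles of W. Then E[W | W < y_ℓ] ≤ E[W | subgroup A] ≤ E[W | W > y_u]. -/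
open MeasureTheory ProbabilityTheory

/-! Exchange argument: if `A` and `L = {W < yl}` have the same probability, then `A \ L` and
`L \ A` have the same probability too, and `W ≥ yl` on the first while `W < yl` on the second.
Trading one for the other can therefore only lower the integral of `W`, so `∫_L W ≤ ∫_A W`;
dividing by the common probability `q` gives the lower bound, and the upper one is symmetric. -/

section Exchange

variable {Ω : Type*} [MeasurableSpace Ω] {μ : Measure Ω} [IsFiniteMeasure μ] {s t : Set Ω}

theorem measureReal_sdiff_eq_of_measureReal_eq (hs : NullMeasurableSet s μ)
    (ht : NullMeasurableSet t μ) (h : μ.real s = μ.real t) : μ.real (s \ t) = μ.real (t \ s) := by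
  have hs' := measureReal_inter_add_sdiff₀ (s := s) ht
  have ht' := measureReal_inter_add_sdiff₀ (s := t) hs
  rw [Set.inter_comm] at ht'
  linarith

theorem setIntegral_le_setIntegral_of_measureReal_eq {W : Ω → ℝ} (hW : Integrable W μ)
    (hs : NullMeasurableSet s μ) (ht : NullMeasurableSet t μ) (h : μ.real s = μ.real t)
    {c : ℝ} (hts : ∀ ω ∈ t \ s, W ω ≤ c) (hst : ∀ ω ∈ s \ t, c ≤ W ω) :
    ∫ ω in t, W ω ∂μ ≤ ∫ ω in s, W ω ∂μ := by
  rw [← integral_inter_add_sdiff₀ (s := t) hs hW.integrableOn,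
    ← integral_inter_add_sdiff₀ (s := s) ht hW.integrableOn, Set.inter_comm t s]
  refine add_le_add le_rfl ?_
  calc ∫ ω in t \ s, W ω ∂μ
      ≤ ∫ _ in t \ s, c ∂μ := setIntegral_mono_on₀ hW.integrableOn integrableOn_const
          (ht.diff hs) hts
    _ = ∫ _ in s \ t, c ∂μ := by
          rw [setIntegral_const, setIntegral_const,
            measureReal_sdiff_eq_of_measureReal_eq hs ht h]
    _ ≤ ∫ ω in s \ t, W ω ∂μ := setIntegral_mono_on₀ integrableOn_const hW.integrableOn
          (hs.diff ht) hst

theorem cexp_le_cexp_of_Pr_eq {W : Ω → ℝ} (hW : Integrable W μ)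
    (hs : NullMeasurableSet s μ) (ht : NullMeasurableSet t μ) (h : Pr μ s = Pr μ t)
    {c : ℝ} (hts : ∀ ω ∈ t \ s, W ω ≤ c) (hst : ∀ ω ∈ s \ t, c ≤ W ω) :
    cexp μ W t ≤ cexp μ W s := by
  rw [cexp, cexp, h]
  exact div_le_div_of_nonneg_right
    (setIntegral_le_setIntegral_of_measureReal_eq hW hs ht h hts hst) ENNReal.toReal_nonneg

end Exchange

theorem trimmed_mean_bound_general
    {Ω : Type*} [MeasurableSpace Ω] (μ : Measure Ω) [IsProbabilityMeasure μ]
    (W : Ω → ℝ) (A : Set Ω) (q yl yu : ℝ)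
    (hA : MeasurableSet A) (hint : Integrable W μ)
    (hq : Pr μ A = q)
    (hyl : Pr μ {ω | W ω < yl} = q)
    (hyu : Pr μ {ω | W ω > yu} = q) :
    cexp μ W {ω | W ω < yl} ≤ cexp μ W A ∧ cexp μ W A ≤ cexp μ W {ω | W ω > yu} := by
  have hWm := hint.aemeasurable.nullMeasurable
  constructor
  · exact cexp_le_cexp_of_Pr_eq hint hA.nullMeasurableSet (hWm measurableSet_Iio)
      (hq.trans hyl.symm) (c := yl) (fun ω hω ↦ hω.1.le) (fun ω hω ↦ not_lt.mp hω.2)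
  · exact cexp_le_cexp_of_Pr_eq hint (hWm measurableSet_Ioi) hA.nullMeasurableSet
      (hyu.trans hq.symm) (c := yu) (fun ω hω ↦ not_lt.mp hω.2) (fun ω hω ↦ hω.1.le)

/-- Trimmed-mean bound: the mean of `W` on any event of probability `q` lies between the mean
of the lowest `q`-fraction and the mean of the highest `q`-fraction of `W`. -/
theorem trimmed_mean_bound
    {Ω : Type*} [MeasurableSpace Ω] (μ : Measure Ω) [IsProbabilityMeasure μ]
    (W : Ω → ℝ) (A : Set Ω) (q yl yu : ℝ)
    (hWm : Measurable W) (hA : MeasurableSet A) (hint : Integrable W μ)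
    (hq : Pr μ A = q) (hq0 : 0 < q) (hq1 : q < 1)
    (hatomless : ∀ y : ℝ, μ {ω | W ω = y} = 0)
    (hyl : Pr μ {ω | W ω < yl} = q)
    (hyu : Pr μ {ω | W ω > yu} = q) :
    cexp μ W {ω | W ω < yl} ≤ cexp μ W A ∧ cexp μ W A ≤ cexp μ W {ω | W ω > yu} :=
  trimmed_mean_bound_general μ W A q yl yu hA hint hq hyl hyu
end

section
/- Under randomization, consistency, monotonicity, and the exclusion restriction P(Y(1,s=0) = Y(0,s=0)) = 1 on the Immune stratum, we have E[Y(1) | S(0)=1, S(1)=0] = [μ̄_10·(1 − ρ̄_1) − μ̄_00·(1 − ρ̄_0)] / (ρ̄_0 − ρ̄_1), where μ̄_zs = E[Y | Z=z, S=s] and ρ̄_z = P(S=1 | Z=z), provided ρ̄_0 > ρ̄_1 and all conditioning events have positive probability. -/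
open MeasureTheory ProbabilityTheory

theorem Pr_eq_measureReal {Ω : Type*} [MeasurableSpace Ω] (μ : Measure Ω) (A : Set Ω) :
    Pr μ A = μ.real A :=
  rfl

theorem cexp_mul_Pr {Ω : Type*} [MeasurableSpace Ω] {μ : Measure Ω} [IsFiniteMeasure μ]
    (Y : Ω → ℝ) (A : Set Ω) : cexp μ Y A * Pr μ A = ∫ ω in A, Y ω ∂μ := by
  by_cases hA : Pr μ A = 0
  · have hA0 : μ A = 0 := (measureReal_eq_zero_iff (measure_ne_top μ A)).1 hA
    simp [hA, Measure.restrict_eq_zero.2 hA0]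
  · exact div_mul_cancel₀ _ hA

section Arm

variable {Ω ζ σ : Type*} {Z : Ω → ζ} {z : ζ} {S Sz : Ω → σ}

theorem setOf_eq_and_eq_of_eqOn (hS : Set.EqOn S Sz {ω | Z ω = z}) (s : σ) :
    {ω | Z ω = z ∧ S ω = s} = Z ⁻¹' {z} ∩ Sz ⁻¹' {s} := by
  ext ω
  exact and_congr_right fun hz => by rw [hS hz]; exact Iff.rfl

variable [MeasurableSpace Ω] [MeasurableSpace ζ] [MeasurableSingletonClass ζ]
  [MeasurableSpace σ] [MeasurableSingletonClass σ] {μ : Measure Ω} {Y Yz : Ω → ℝ}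

theorem measureReal_setOf_eq_and_eq
    (hind : IndepFun Z Sz μ) (hS : Set.EqOn S Sz {ω | Z ω = z}) (s : σ) :
    μ.real {ω | Z ω = z ∧ S ω = s} = μ.real {ω | Z ω = z} * μ.real {ω | Sz ω = s} := by
  rw [setOf_eq_and_eq_of_eqOn hS, Measure.real, Measure.real, Measure.real,
    hind.measure_inter_preimage_eq_mul _ _ (measurableSet_singleton z)
      (measurableSet_singleton s), ENNReal.toReal_mul]
  rfl

theorem setIntegral_setOf_eq_and_eq (hZm : Measurable Z) (hSzm : Measurable Sz)
    (hYzm : Measurable Yz) (hind : IndepFun Z (fun ω => (Sz ω, Yz ω)) μ)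
    (hS : Set.EqOn S Sz {ω | Z ω = z}) (hY : Set.EqOn Y Yz {ω | Z ω = z}) (s : σ) :
    ∫ ω in {ω | Z ω = z ∧ S ω = s}, Y ω ∂μ
      = μ.real {ω | Z ω = z} * ∫ ω in {ω | Sz ω = s}, Yz ω ∂μ := by
  have hZz : MeasurableSet (Z ⁻¹' {z}) := hZm (measurableSet_singleton z)
  have hSzs : MeasurableSet {ω | Sz ω = s} := hSzm (measurableSet_singleton s)
  have hf : Measurable ({p : σ × ℝ | p.1 = s}.indicator Prod.snd) :=
    measurable_snd.indicator (measurable_fst (measurableSet_singleton s))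
  calc ∫ ω in {ω | Z ω = z ∧ S ω = s}, Y ω ∂μ
      = ∫ ω in Z ⁻¹' {z} ∩ {ω | Sz ω = s}, Yz ω ∂μ := by
        rw [setOf_eq_and_eq_of_eqOn hS]
        exact setIntegral_congr_fun (hZz.inter hSzs) fun _ hω => hY hω.1
    _ = ∫ ω in Z ⁻¹' {z}, {ω | Sz ω = s}.indicator Yz ω ∂μ :=
        (setIntegral_indicator hSzs).symm
    _ = μ.real (Z ⁻¹' {z}) * ∫ ω, {ω | Sz ω = s}.indicator Yz ω ∂μ :=
        Indep.setIntegral_eq_mul (X := fun ω => (Sz ω, Yz ω)) hZm.comap_le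
          ((IndepFun_iff_Indep Z _ μ).1 hind) (hSzm.prodMk hYzm).aemeasurable
          ⟨{z}, measurableSet_singleton z, rfl⟩ hf.aestronglyMeasurable
    _ = μ.real {ω | Z ω = z} * ∫ ω in {ω | Sz ω = s}, Yz ω ∂μ := by
        rw [integral_indicator hSzs]
        rfl

theorem Pr_setOf_eq_and_eq_div (hind : IndepFun Z Sz μ) (hS : Set.EqOn S Sz {ω | Z ω = z})
    (hz : μ.real {ω | Z ω = z} ≠ 0) (s : σ) :
    Pr μ {ω | S ω = s ∧ Z ω = z} / Pr μ {ω | Z ω = z} = μ.real {ω | Sz ω = s} := by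
  rw [Pr_eq_measureReal, Pr_eq_measureReal, Set.ext fun _ => and_comm,
    measureReal_setOf_eq_and_eq hind hS, mul_div_cancel_left₀ _ hz]

theorem cexp_setOf_eq_and_eq_mul [IsFiniteMeasure μ] (hZm : Measurable Z)
    (hSzm : Measurable Sz) (hYzm : Measurable Yz) (hind : IndepFun Z (fun ω => (Sz ω, Yz ω)) μ)
    (hS : Set.EqOn S Sz {ω | Z ω = z}) (hY : Set.EqOn Y Yz {ω | Z ω = z})
    (hz : μ.real {ω | Z ω = z} ≠ 0) (s : σ) :
    cexp μ Y {ω | Z ω = z ∧ S ω = s} * μ.real {ω | Sz ω = s}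
      = ∫ ω in {ω | Sz ω = s}, Yz ω ∂μ := by
  have hZSz : IndepFun Z Sz μ := hind.comp measurable_id measurable_fst
  apply mul_left_cancel₀ hz
  rw [← setIntegral_setOf_eq_and_eq hZm hSzm hYzm hind hS hY, ← cexp_mul_Pr, Pr_eq_measureReal,
    measureReal_setOf_eq_and_eq hZSz hS]
  ring

end Arm

section Strata

variable {Ω : Type*} {S0 S1 : Ω → ℝ}

theorem setOf_eq_zero_eq_union (hS0 : ∀ ω, S0 ω = 0 ∨ S0 ω = 1) :
    {ω | S1 ω = 0} = {ω | S1 ω = 0 ∧ S0 ω = 0} ∪ {ω | S0 ω = 1 ∧ S1 ω = 0} := by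
  ext ω
  rcases hS0 ω with h | h <;> simp [h]

variable [MeasurableSpace Ω] {μ : Measure Ω}

theorem probReal_setOf_eq_zero [IsProbabilityMeasure μ] (hS1m : Measurable S1)
    (hS1 : ∀ ω, S1 ω = 0 ∨ S1 ω = 1) :
    μ.real {ω | S1 ω = 0} = 1 - μ.real {ω | S1 ω = 1} := by
  have hcompl : {ω | S1 ω = 0} = {ω | S1 ω = 1}ᶜ := by
    ext ω
    rcases hS1 ω with h | h <;> simp [h]
  rw [hcompl]
  exact probReal_compl_eq_one_sub (hS1m (measurableSet_singleton 1))

theorem setOf_eq_zero_and_ae_eq (hS1 : ∀ ω, S1 ω = 0 ∨ S1 ω = 1)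
    (hmono : ∀ᵐ ω ∂μ, S1 ω ≤ S0 ω) :
    {ω | S1 ω = 0 ∧ S0 ω = 0} =ᵐ[μ] {ω | S0 ω = 0} := by
  rw [Filter.eventuallyEq_set]
  filter_upwards [hmono] with ω hω
  refine and_iff_right_of_imp fun h0 => (hS1 ω).resolve_right fun h1 => ?_
  rw [h0, h1] at hω
  norm_num at hω

theorem setIntegral_setOf_eq_zero (hS0m : Measurable S0) (hS1m : Measurable S1)
    (hS0 : ∀ ω, S0 ω = 0 ∨ S0 ω = 1) (hS1 : ∀ ω, S1 ω = 0 ∨ S1 ω = 1)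
    (hmono : ∀ᵐ ω ∂μ, S1 ω ≤ S0 ω) {f g : Ω → ℝ} (hf : Integrable f μ)
    (hfg : ∀ᵐ ω ∂μ, (S1 ω = 0 ∧ S0 ω = 0) → f ω = g ω) :
    ∫ ω in {ω | S1 ω = 0}, f ω ∂μ
      = ∫ ω in {ω | S0 ω = 0}, g ω ∂μ + ∫ ω in {ω | S0 ω = 1 ∧ S1 ω = 0}, f ω ∂μ := by
  have hC : MeasurableSet {ω | S1 ω = 0 ∧ S0 ω = 0} :=
    (hS1m (measurableSet_singleton 0)).inter (hS0m (measurableSet_singleton 0))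
  have hB : MeasurableSet {ω | S0 ω = 1 ∧ S1 ω = 0} :=
    (hS0m (measurableSet_singleton 1)).inter (hS1m (measurableSet_singleton 0))
  have hdisj : Disjoint {ω | S1 ω = 0 ∧ S0 ω = 0} {ω | S0 ω = 1 ∧ S1 ω = 0} :=
    Set.disjoint_left.2 fun _ hC hB => zero_ne_one (hC.2.symm.trans hB.1)
  rw [setOf_eq_zero_eq_union hS0, setIntegral_union hdisj hB hf.integrableOn hf.integrableOn,
    setIntegral_congr_ae hC (hfg.mono fun _ h hω => h hω),
    setIntegral_congr_set (setOf_eq_zero_and_ae_eq hS1 hmono)]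

theorem measureReal_setOf_eq_zero [IsFiniteMeasure μ] (hS0m : Measurable S0)
    (hS1m : Measurable S1) (hS0 : ∀ ω, S0 ω = 0 ∨ S0 ω = 1) (hS1 : ∀ ω, S1 ω = 0 ∨ S1 ω = 1)
    (hmono : ∀ᵐ ω ∂μ, S1 ω ≤ S0 ω) :
    μ.real {ω | S1 ω = 0} = μ.real {ω | S0 ω = 0} + μ.real {ω | S0 ω = 1 ∧ S1 ω = 0} := by
  simpa using setIntegral_setOf_eq_zero hS0m hS1m hS0 hS1 hmono (integrable_const (1 : ℝ))
    (g := fun _ => 1) (ae_of_all _ fun _ _ => rfl)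

end Strata

theorem id_protected_mean_ER_general
    {Ω : Type*} [MeasurableSpace Ω] (μ : Measure Ω) [IsProbabilityMeasure μ]
    (Z S0 S1 Y0 Y1 S Y : Ω → ℝ) (ρ0 ρ1 m10 m00 : ℝ)
    (hZm : Measurable Z) (hS0m : Measurable S0) (hS1m : Measurable S1)
    (hY0m : Measurable Y0) (hY1m : Measurable Y1)
    (hS0 : ∀ ω, S0 ω = 0 ∨ S0 ω = 1) (hS1 : ∀ ω, S1 ω = 0 ∨ S1 ω = 1)
    (hindep : IndepFun Z (fun ω => (S0 ω, S1 ω, Y0 ω, Y1 ω)) μ)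
    (hconsS : ∀ ω, S ω = if Z ω = 1 then S1 ω else S0 ω)
    (hconsY : ∀ ω, Y ω = if Z ω = 1 then Y1 ω else Y0 ω)
    (hmono : ∀ᵐ ω ∂μ, S1 ω ≤ S0 ω)
    (hER : ∀ᵐ ω ∂μ, (S1 ω = 0 ∧ S0 ω = 0) → Y1 ω = Y0 ω)
    (hint1 : Integrable Y1 μ)
    (hρ0 : ρ0 = Pr μ {ω | S ω = 1 ∧ Z ω = 0} / Pr μ {ω | Z ω = 0})
    (hρ1 : ρ1 = Pr μ {ω | S ω = 1 ∧ Z ω = 1} / Pr μ {ω | Z ω = 1})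
    (hm10 : m10 = cexp μ Y {ω | Z ω = 1 ∧ S ω = 0})
    (hm00 : m00 = cexp μ Y {ω | Z ω = 0 ∧ S ω = 0})
    (hpos : ∀ z s : ℝ, (z = 0 ∨ z = 1) → (s = 0 ∨ s = 1) →
      0 < Pr μ {ω | Z ω = z ∧ S ω = s}) :
    cexp μ Y1 {ω | S0 ω = 1 ∧ S1 ω = 0}
      = (m10 * (1 - ρ1) - m00 * (1 - ρ0)) / (ρ0 - ρ1) := by
  have hZ : ∀ z : ℝ, (z = 0 ∨ z = 1) → μ.real {ω | Z ω = z} ≠ 0 := fun z hz =>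
    ((hpos z 0 hz (Or.inl rfl)).trans_le (measureReal_mono fun _ hω => hω.1)).ne'
  have hind1 : IndepFun Z (fun ω => (S1 ω, Y1 ω)) μ :=
    hindep.comp measurable_id (show Measurable fun p : ℝ × ℝ × ℝ × ℝ => (p.2.1, p.2.2.2) by
      fun_prop)
  have hind0 : IndepFun Z (fun ω => (S0 ω, Y0 ω)) μ :=
    hindep.comp measurable_id (show Measurable fun p : ℝ × ℝ × ℝ × ℝ => (p.1, p.2.2.1) by
      fun_prop)
  have hZS1 : IndepFun Z S1 μ := hind1.comp measurable_id measurable_fst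
  have hZS0 : IndepFun Z S0 μ := hind0.comp measurable_id measurable_fst
  have hS1' : Set.EqOn S S1 {ω | Z ω = 1} := fun ω (h : Z ω = 1) => by simp [hconsS ω, h]
  have hS0' : Set.EqOn S S0 {ω | Z ω = 0} := fun ω (h : Z ω = 0) => by simp [hconsS ω, h]
  have hY1' : Set.EqOn Y Y1 {ω | Z ω = 1} := fun ω (h : Z ω = 1) => by simp [hconsY ω, h]
  have hY0' : Set.EqOn Y Y0 {ω | Z ω = 0} := fun ω (h : Z ω = 0) => by simp [hconsY ω, h]
  have hρ1' : ρ1 = 1 - μ.real {ω | S1 ω = 0} := by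
    rw [hρ1, Pr_setOf_eq_and_eq_div hZS1 hS1' (hZ 1 (Or.inr rfl)), probReal_setOf_eq_zero hS1m hS1]
    ring
  have hρ0' : ρ0 = 1 - μ.real {ω | S0 ω = 0} := by
    rw [hρ0, Pr_setOf_eq_and_eq_div hZS0 hS0' (hZ 0 (Or.inl rfl)), probReal_setOf_eq_zero hS0m hS0]
    ring
  have hm10' : m10 * μ.real {ω | S1 ω = 0} = ∫ ω in {ω | S1 ω = 0}, Y1 ω ∂μ :=
    hm10 ▸ cexp_setOf_eq_and_eq_mul hZm hS1m hY1m hind1 hS1' hY1' (hZ 1 (Or.inr rfl)) 0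
  have hm00' : m00 * μ.real {ω | S0 ω = 0} = ∫ ω in {ω | S0 ω = 0}, Y0 ω ∂μ :=
    hm00 ▸ cexp_setOf_eq_and_eq_mul hZm hS0m hY0m hind0 hS0' hY0' (hZ 0 (Or.inl rfl)) 0
  calc cexp μ Y1 {ω | S0 ω = 1 ∧ S1 ω = 0}
      = (∫ ω in {ω | S0 ω = 1 ∧ S1 ω = 0}, Y1 ω ∂μ) / μ.real {ω | S0 ω = 1 ∧ S1 ω = 0} := rfl
    _ = (m10 * μ.real {ω | S1 ω = 0} - m00 * μ.real {ω | S0 ω = 0})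
          / (μ.real {ω | S1 ω = 0} - μ.real {ω | S0 ω = 0}) := by
        rw [hm10', hm00', setIntegral_setOf_eq_zero hS0m hS1m hS0 hS1 hmono hint1 hER,
          measureReal_setOf_eq_zero hS0m hS1m hS0 hS1 hmono]
        congr 1 <;> ring
    _ = (m10 * (1 - ρ1) - m00 * (1 - ρ0)) / (ρ0 - ρ1) := by
        rw [hρ1', hρ0']
        congr 1 <;> ring

/-- Identification of the Protected-stratum mean under vaccine via the exclusion restriction. -/
theorem id_protected_mean_ER
    {Ω : Type*} [MeasurableSpace Ω] (μ : Measure Ω) [IsProbabilityMeasure μ]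
    (Z S0 S1 Y0 Y1 S Y : Ω → ℝ) (ρ0 ρ1 m10 m00 : ℝ)
    (hZm : Measurable Z) (hS0m : Measurable S0) (hS1m : Measurable S1)
    (hY0m : Measurable Y0) (hY1m : Measurable Y1)
    (hZ : ∀ ω, Z ω = 0 ∨ Z ω = 1)
    (hS0 : ∀ ω, S0 ω = 0 ∨ S0 ω = 1) (hS1 : ∀ ω, S1 ω = 0 ∨ S1 ω = 1)
    (hindep : IndepFun Z (fun ω => (S0 ω, S1 ω, Y0 ω, Y1 ω)) μ)
    (hconsS : ∀ ω, S ω = if Z ω = 1 then S1 ω else S0 ω)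
    (hconsY : ∀ ω, Y ω = if Z ω = 1 then Y1 ω else Y0 ω)
    (hmono : ∀ᵐ ω ∂μ, S1 ω ≤ S0 ω)
    (hER : ∀ᵐ ω ∂μ, (S1 ω = 0 ∧ S0 ω = 0) → Y1 ω = Y0 ω)
    (hint0 : Integrable Y0 μ) (hint1 : Integrable Y1 μ)
    (hρ0 : ρ0 = Pr μ {ω | S ω = 1 ∧ Z ω = 0} / Pr μ {ω | Z ω = 0})
    (hρ1 : ρ1 = Pr μ {ω | S ω = 1 ∧ Z ω = 1} / Pr μ {ω | Z ω = 1})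
    (hm10 : m10 = cexp μ Y {ω | Z ω = 1 ∧ S ω = 0})
    (hm00 : m00 = cexp μ Y {ω | Z ω = 0 ∧ S ω = 0})
    (hpos : ∀ z s : ℝ, (z = 0 ∨ z = 1) → (s = 0 ∨ s = 1) →
      0 < Pr μ {ω | Z ω = z ∧ S ω = s})
    (hposP : 0 < Pr μ {ω | S0 ω = 1 ∧ S1 ω = 0})
    (hlt : ρ1 < ρ0) :
    cexp μ Y1 {ω | S0 ω = 1 ∧ S1 ω = 0}
      = (m10 * (1 - ρ1) - m00 * (1 - ρ0)) / (ρ0 - ρ1) :=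
  id_protected_mean_ER_general μ Z S0 S1 Y0 Y1 S Y ρ0 ρ1 m10 m00 hZm hS0m hS1m hY0m hY1m hS0 hS1
    hindep hconsS hconsY hmono hER hint1 hρ0 hρ1 hm10 hm00 hpos
end

section
/- Under randomization, consistency, monotonicity, and the exclusion restriction, E[Y(1) | S(0)=1] = (E[Y | Z=1] − E[Y | Z=0, S=0]·(1 − ρ̄_0)) / ρ̄_0, where ρ̄_0 = P(S=1 | Z=0). -/
/-!
Under randomization the arm `Z = 1` recovers the whole mean `E[Y(1)]`, while the cell
`Z = 0, S = 0` is the stratum `S(0) = 0` observed under placebo, so it recovers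
`E[Y(0) | S(0) = 0]`.
By monotonicity that stratum has `S(1) = 0` as well, and the exclusion restriction turns its mean
into `E[Y(1) | S(0) = 0]`. Subtracting its share `(1 - ρ̄₀) E[Y(1) | S(0) = 0]` from `E[Y(1)]`
leaves `ρ̄₀ E[Y(1) | S(0) = 1]`, since `ρ̄₀ = P(S(0) = 1)` by randomization.
-/

open MeasureTheory ProbabilityTheory

namespace ProbabilityTheory

lemma IndepFun.setIntegral_preimage_eq_mul {Ω α β : Type*} [MeasurableSpace Ω]
    [MeasurableSpace α] [MeasurableSpace β] {μ : Measure Ω} {Z : Ω → α} {X : Ω → β}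
    (hZX : IndepFun Z X μ) (hZ : Measurable Z) (hX : AEMeasurable X μ) {s : Set α}
    (hs : MeasurableSet s) {f : β → ℝ} (hf : AEStronglyMeasurable f (μ.map X)) :
    ∫ ω in Z ⁻¹' s, f (X ω) ∂μ = μ.real (Z ⁻¹' s) * ∫ ω, f (X ω) ∂μ :=
  Indep.setIntegral_eq_mul hZ.comap_le hZX hX ⟨s, hs, rfl⟩ hf

end ProbabilityTheory

section ConditionalMean

variable {Ω : Type*} [MeasurableSpace Ω] {μ : Measure Ω} [IsProbabilityMeasure μ]
  {Y : Ω → ℝ} {A : Set Ω}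

lemma Pr_compl (hA : MeasurableSet A) : Pr μ Aᶜ = 1 - Pr μ A :=
  probReal_compl_eq_one_sub hA

lemma cexp_eq_integral_sub_cexp_compl (hA : MeasurableSet A) (hY : Integrable Y μ)
    (hAc : Pr μ Aᶜ ≠ 0) :
    cexp μ Y A = (∫ ω, Y ω ∂μ - cexp μ Y Aᶜ * (1 - Pr μ A)) / Pr μ A := by
  rw [← Pr_compl hA, cexp, cexp, div_mul_cancel₀ _ hAc, ← integral_add_compl hA hY,
    add_sub_cancel_right]

end ConditionalMean

lemma setOf_untreated_and_eq {Ω : Type*} {Z S0 S1 S : Ω → ℝ}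
    (hconsS : ∀ ω, S ω = if Z ω = 1 then S1 ω else S0 ω) (s : ℝ) :
    {ω | Z ω = 0 ∧ S ω = s} = {ω | Z ω = 0} ∩ {ω | S0 ω = s} := by
  ext ω
  simp only [Set.mem_ofPred_eq, Set.mem_inter_iff]
  exact and_congr_right fun hZ => by rw [hconsS, hZ, if_neg zero_ne_one]

section PotentialOutcomes

variable {Ω : Type*} [MeasurableSpace Ω] {μ : Measure Ω} {Z S0 S1 Y0 Y1 S Y : Ω → ℝ}

lemma Pr_untreated_and_eq_mul (hindep : IndepFun Z S0 μ)
    (hconsS : ∀ ω, S ω = if Z ω = 1 then S1 ω else S0 ω) (s : ℝ) :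
    Pr μ {ω | Z ω = 0 ∧ S ω = s} = Pr μ {ω | Z ω = 0} * Pr μ {ω | S0 ω = s} := by
  rw [Pr, Pr, Pr, setOf_untreated_and_eq hconsS, ← ENNReal.toReal_mul]
  exact congrArg ENNReal.toReal (hindep.measure_inter_preimage_eq_mul _ _
    (measurableSet_singleton 0) (measurableSet_singleton s))

lemma cexp_treated_eq_integral (hindep : IndepFun Z Y1 μ) (hZm : Measurable Z)
    (hY1m : AEMeasurable Y1 μ)
    (hconsY : ∀ ω, Y ω = if Z ω = 1 then Y1 ω else Y0 ω) (hpos : Pr μ {ω | Z ω = 1} ≠ 0) :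
    cexp μ Y {ω | Z ω = 1} = ∫ ω, Y1 ω ∂μ := by
  have hsetIntegral : ∫ ω in {ω | Z ω = 1}, Y ω ∂μ = Pr μ {ω | Z ω = 1} * ∫ ω, Y1 ω ∂μ :=
    calc ∫ ω in {ω | Z ω = 1}, Y ω ∂μ
        = ∫ ω in Z ⁻¹' {1}, id (Y1 ω) ∂μ :=
          setIntegral_congr_fun (hZm (measurableSet_singleton 1)) fun ω hω => by
            rw [hconsY]; exact if_pos hω
      _ = Pr μ {ω | Z ω = 1} * ∫ ω, Y1 ω ∂μ :=
          hindep.setIntegral_preimage_eq_mul hZm hY1m (measurableSet_singleton 1)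
            aestronglyMeasurable_id
  rw [cexp, hsetIntegral, mul_div_cancel_left₀ _ hpos]

lemma cexp_untreated_uninfected_eq (hindep : IndepFun Z (fun ω => (S0 ω, Y0 ω)) μ)
    (hZm : Measurable Z) (hS0m : Measurable S0) (hY0m : AEMeasurable Y0 μ)
    (hconsS : ∀ ω, S ω = if Z ω = 1 then S1 ω else S0 ω)
    (hconsY : ∀ ω, Y ω = if Z ω = 1 then Y1 ω else Y0 ω) (hpos : Pr μ {ω | Z ω = 0} ≠ 0) :
    cexp μ Y {ω | Z ω = 0 ∧ S ω = 0} = cexp μ Y0 {ω | S0 ω = 0} := by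
  have hB : MeasurableSet {ω | S0 ω = 0} := hS0m (measurableSet_singleton 0)
  have hsetIntegral : ∫ ω in {ω | Z ω = 0 ∧ S ω = 0}, Y ω ∂μ
      = Pr μ {ω | Z ω = 0} * ∫ ω in {ω | S0 ω = 0}, Y0 ω ∂μ :=
    calc ∫ ω in {ω | Z ω = 0 ∧ S ω = 0}, Y ω ∂μ
        = ∫ ω in {ω | Z ω = 0}, {ω | S0 ω = 0}.indicator Y0 ω ∂μ := by
          rw [setOf_untreated_and_eq hconsS, setIntegral_indicator hB]
          exact setIntegral_congr_fun ((hZm (measurableSet_singleton 0)).inter hB)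
            fun ω hω => by rw [hconsY, hω.1, if_neg zero_ne_one]
      _ = ∫ ω in Z ⁻¹' {0}, (Prod.fst ⁻¹' {(0 : ℝ)}).indicator Prod.snd (S0 ω, Y0 ω) ∂μ := rfl
      _ = Pr μ {ω | Z ω = 0} * ∫ ω in {ω | S0 ω = 0}, Y0 ω ∂μ := by
          have hf : Measurable ((Prod.fst ⁻¹' {(0 : ℝ)}).indicator (Prod.snd : ℝ × ℝ → ℝ)) :=
            measurable_snd.indicator (measurable_fst (measurableSet_singleton 0))
          rw [hindep.setIntegral_preimage_eq_mul hZm (hS0m.aemeasurable.prodMk hY0m)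
            (measurableSet_singleton 0) hf.aestronglyMeasurable, ← integral_indicator hB]
          rfl
  have hindepS0 : IndepFun Z S0 μ := hindep.comp measurable_id measurable_fst
  rw [cexp, cexp, hsetIntegral, Pr_untreated_and_eq_mul hindepS0 hconsS, mul_div_mul_left _ _ hpos]

lemma cexp_uninfected_eq_of_exclusion (hS0m : Measurable S0) (hS1 : ∀ ω, S1 ω = 0 ∨ S1 ω = 1)
    (hmono : ∀ᵐ ω ∂μ, S1 ω ≤ S0 ω) (hER : ∀ᵐ ω ∂μ, (S0 ω = 0 ∧ S1 ω = 0) → Y1 ω = Y0 ω) :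
    cexp μ Y0 {ω | S0 ω = 0} = cexp μ Y1 {ω | S0 ω = 0} := by
  rw [cexp, cexp]
  congr 1
  refine setIntegral_congr_ae (hS0m (measurableSet_singleton 0)) ?_
  filter_upwards [hmono, hER] with ω hmono hER hS0
  have hS1ω : S1 ω = 0 := (hS1 ω).resolve_right fun h => by linarith
  exact (hER ⟨hS0, hS1ω⟩).symm

end PotentialOutcomes

theorem id_EY1_naturally_infected_ER_general
    {Ω : Type*} [MeasurableSpace Ω] (μ : Measure Ω) [IsProbabilityMeasure μ]
    (Z S0 S1 Y0 Y1 S Y : Ω → ℝ) (ρ0 : ℝ)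
    (hZm : Measurable Z) (hS0m : Measurable S0)
    (hY0m : Measurable Y0) (hY1m : Measurable Y1)
    (hS0 : ∀ ω, S0 ω = 0 ∨ S0 ω = 1) (hS1 : ∀ ω, S1 ω = 0 ∨ S1 ω = 1)
    (hindep : IndepFun Z (fun ω => (S0 ω, S1 ω, Y0 ω, Y1 ω)) μ)
    (hconsS : ∀ ω, S ω = if Z ω = 1 then S1 ω else S0 ω)
    (hconsY : ∀ ω, Y ω = if Z ω = 1 then Y1 ω else Y0 ω)
    (hmono : ∀ᵐ ω ∂μ, S1 ω ≤ S0 ω)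
    (hER : ∀ᵐ ω ∂μ, (S0 ω = 0 ∧ S1 ω = 0) → Y1 ω = Y0 ω)
    (hint1 : Integrable Y1 μ)
    (hρ0 : ρ0 = Pr μ {ω | S ω = 1 ∧ Z ω = 0} / Pr μ {ω | Z ω = 0})
    (hpos0 : 0 < Pr μ {ω | Z ω = 0}) (hpos1 : 0 < Pr μ {ω | Z ω = 1})
    (hpos00 : 0 < Pr μ {ω | Z ω = 0 ∧ S ω = 0}) :
    cexp μ Y1 {ω | S0 ω = 1}
      = (cexp μ Y {ω | Z ω = 1} - cexp μ Y {ω | Z ω = 0 ∧ S ω = 0} * (1 - ρ0)) / ρ0 := by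
  have hindepS0Y0 : IndepFun Z (fun ω => (S0 ω, Y0 ω)) μ :=
    hindep.comp measurable_id (by fun_prop : Measurable fun p : ℝ × ℝ × ℝ × ℝ => (p.1, p.2.2.1))
  have hindepY1 : IndepFun Z Y1 μ :=
    hindep.comp measurable_id (by fun_prop : Measurable fun p : ℝ × ℝ × ℝ × ℝ => p.2.2.2)
  have hindepS0 : IndepFun Z S0 μ := hindepS0Y0.comp measurable_id measurable_fst
  have hPr := Pr_untreated_and_eq_mul hindepS0 hconsS
  have hρ : ρ0 = Pr μ {ω | S0 ω = 1} := by
    rw [hρ0, Set.ext fun _ => and_comm, hPr, mul_div_cancel_left₀ _ hpos0.ne']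
  have hcompl : {ω | S0 ω = 0} = {ω | S0 ω = 1}ᶜ := by
    ext ω
    rcases hS0 ω with h | h <;> simp [h]
  have hp0 : Pr μ {ω | S0 ω = 0} ≠ 0 := right_ne_zero_of_mul (hPr 0 ▸ hpos00.ne')
  rw [cexp_treated_eq_integral hindepY1 hZm hY1m.aemeasurable hconsY hpos1.ne',
    cexp_untreated_uninfected_eq hindepS0Y0 hZm hS0m hY0m.aemeasurable hconsS hconsY hpos0.ne',
    cexp_uninfected_eq_of_exclusion hS0m hS1 hmono hER, hcompl, hρ]
  exact cexp_eq_integral_sub_cexp_compl (hS0m (measurableSet_singleton 1)) hint1 (hcompl ▸ hp0)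

/-- Identification of the Naturally Infected mean under vaccine via the exclusion
restriction: `E[Y(1) | S(0)=1] = (E[Y | Z=1] - E[Y | Z=0, S=0](1 - ρ̄₀)) / ρ̄₀`. -/
theorem id_EY1_naturally_infected_ER
    {Ω : Type*} [MeasurableSpace Ω] (μ : Measure Ω) [IsProbabilityMeasure μ]
    (Z S0 S1 Y0 Y1 S Y : Ω → ℝ) (ρ0 : ℝ)
    (hZm : Measurable Z) (hS0m : Measurable S0) (hS1m : Measurable S1)
    (hY0m : Measurable Y0) (hY1m : Measurable Y1)
    (hZ : ∀ ω, Z ω = 0 ∨ Z ω = 1)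
    (hS0 : ∀ ω, S0 ω = 0 ∨ S0 ω = 1) (hS1 : ∀ ω, S1 ω = 0 ∨ S1 ω = 1)
    (hindep : IndepFun Z (fun ω => (S0 ω, S1 ω, Y0 ω, Y1 ω)) μ)
    (hconsS : ∀ ω, S ω = if Z ω = 1 then S1 ω else S0 ω)
    (hconsY : ∀ ω, Y ω = if Z ω = 1 then Y1 ω else Y0 ω)
    (hmono : ∀ᵐ ω ∂μ, S1 ω ≤ S0 ω)
    (hER : ∀ᵐ ω ∂μ, (S0 ω = 0 ∧ S1 ω = 0) → Y1 ω = Y0 ω)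
    (hint0 : Integrable Y0 μ) (hint1 : Integrable Y1 μ)
    (hρ0 : ρ0 = Pr μ {ω | S ω = 1 ∧ Z ω = 0} / Pr μ {ω | Z ω = 0})
    (hpos0 : 0 < Pr μ {ω | Z ω = 0}) (hpos1 : 0 < Pr μ {ω | Z ω = 1})
    (hρ0pos : 0 < ρ0)
    (hpos00 : 0 < Pr μ {ω | Z ω = 0 ∧ S ω = 0}) :
    cexp μ Y1 {ω | S0 ω = 1}
      = (cexp μ Y {ω | Z ω = 1} - cexp μ Y {ω | Z ω = 0 ∧ S ω = 0} * (1 - ρ0)) / ρ0 :=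
  id_EY1_naturally_infected_ER_general μ Z S0 S1 Y0 Y1 S Y ρ0 hZm hS0m hY0m hY1m hS0 hS1 hindep
    hconsS hconsY hmono hER hint1 hρ0 hpos0 hpos1 hpos00
end

section
/- Under randomization, consistency, monotonicity, and partial principal ignorability S(0) ⫫ Y(1) | X, S(1)=0 (with discrete X), the conditional mean of Y(1) in the Protected stratum is E[Y(1) | S(0)=1, S(1)=0, X=x] = E[Y | Z=1, S=0, X=x] for every x with P(S(0)=1, S(1)=0, X=x) > 0 and P(Z=1, S=0, X=x) > 0. -/
/-!
Put `A = {X = x, S(1) = 0}`. Partial principal ignorability says that on `A` the event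
`{S(0) = 1}` rescales the law of `Y(1)` by a constant, so the conditional mean of `Y(1)` on the
Protected stratum `{S(0) = 1} ∩ A` equals its conditional mean on `A`. Randomization makes
`{Z = 1}` independent of `(X, S(1), Y(1))`, so conditioning further on `Z = 1` does not change
that mean either. Finally, consistency identifies `{Z = 1, S = 0, X = x}` with `{Z = 1} ∩ A`, on
which `Y = Y(1)`.
-/

open MeasureTheory ProbabilityTheory

open Set

section

variable {Ω : Type*} [MeasurableSpace Ω] {μ : Measure Ω}

theorem cexp_congr_fun_s8 {Y Y' : Ω → ℝ} {A : Set Ω} (hA : MeasurableSet A) (h : EqOn Y Y' A) :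
    cexp μ Y A = cexp μ Y' A := by
  rw [cexp, cexp, setIntegral_congr_fun hA h]

theorem cexp_eq_of_forall_measure_inter_preimage_mul_eq {Y : Ω → ℝ} (hY : Measurable Y)
    {L A : Set Ω} (hL : Pr μ L ≠ 0) (hA : Pr μ A ≠ 0)
    (h : ∀ B, MeasurableSet B → μ (Y ⁻¹' B ∩ L) * μ A = μ (Y ⁻¹' B ∩ A) * μ L) :
    cexp μ Y L = cexp μ Y A := by
  have hmap : (μ A • μ.restrict L).map Y = (μ L • μ.restrict A).map Y := by
    ext B hB
    simp only [Measure.map_apply hY hB, Measure.smul_apply, smul_eq_mul,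
      Measure.restrict_apply (hY hB)]
    rw [mul_comm, h B hB, mul_comm]
  have hintegral : (μ A).toReal * ∫ ω in L, Y ω ∂μ = (μ L).toReal * ∫ ω in A, Y ω ∂μ := by
    have := congrArg (fun ν => ∫ y, id y ∂ν) hmap
    rw [integral_map hY.aemeasurable aestronglyMeasurable_id,
      integral_map hY.aemeasurable aestronglyMeasurable_id,
      integral_smul_measure, integral_smul_measure] at this
    simpa only [id, smul_eq_mul] using this
  rw [cexp, cexp, div_eq_div_iff hL hA]
  unfold Pr
  linarith

theorem cexp_comp_inter_preimage_of_indepFun {β γ : Type*} [MeasurableSpace β]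
    [MeasurableSpace γ] {Z : Ω → β} {W : Ω → γ} (hind : IndepFun Z W μ) (hZ : Measurable Z)
    (hW : Measurable W) {B : Set β} {T : Set γ} (hB : MeasurableSet B) (hT : MeasurableSet T)
    {f : γ → ℝ} (hf : Measurable f) (hZB : Pr μ (Z ⁻¹' B) ≠ 0) :
    cexp μ (f ∘ W) (Z ⁻¹' B ∩ W ⁻¹' T) = cexp μ (f ∘ W) (W ⁻¹' T) := by
  have hprod : (B.indicator 1 ∘ Z) * (T.indicator f ∘ W)
      = (Z ⁻¹' B ∩ W ⁻¹' T).indicator (f ∘ W) := by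
    ext ω
    by_cases hz : Z ω ∈ B <;> by_cases hw : W ω ∈ T <;> simp [hz, hw]
  have hintegral : ∫ ω in Z ⁻¹' B ∩ W ⁻¹' T, (f ∘ W) ω ∂μ
      = (μ (Z ⁻¹' B)).toReal * ∫ ω in W ⁻¹' T, (f ∘ W) ω ∂μ := by
    have := hind.integral_comp_mul_comp hZ.aemeasurable hW.aemeasurable
      (measurable_one.indicator hB).aestronglyMeasurable
      (hf.indicator hT).aestronglyMeasurable
    rw [hprod, integral_indicator ((hZ hB).inter (hW hT))] at this
    rw [this, ← integral_indicator (hW hT), ← measureReal_def, ← integral_indicator_one (hZ hB)]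
    rfl
  have hmeas : μ (Z ⁻¹' B ∩ W ⁻¹' T) = μ (Z ⁻¹' B) * μ (W ⁻¹' T) :=
    hind.measure_inter_preimage_eq_mul B T hB hT
  rw [cexp, cexp, Pr, Pr, hintegral, hmeas, ENNReal.toReal_mul]
  exact mul_div_mul_left _ _ hZB

end

theorem id_protected_mean_PPI_general
    {Ω : Type*} [MeasurableSpace Ω] (μ : Measure Ω) [IsProbabilityMeasure μ]
    (X : Ω → ℕ) (Z S0 S1 Y0 Y1 S Y : Ω → ℝ)
    (hXm : Measurable X) (hZm : Measurable Z)
    (hS1m : Measurable S1) (hY1m : Measurable Y1)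
    (hindep : IndepFun Z (fun ω => (X ω, S0 ω, S1 ω, Y0 ω, Y1 ω)) μ)
    (hconsS : ∀ ω, S ω = if Z ω = 1 then S1 ω else S0 ω)
    (hconsY : ∀ ω, Y ω = if Z ω = 1 then Y1 ω else Y0 ω)
    -- partial principal ignorability: Y(1) ⫫ S(0) given (X = x, S(1) = 0)
    (hPPI : ∀ (x : ℕ) (B : Set ℝ), MeasurableSet B → ∀ s₀ : ℝ,
      μ ({ω | Y1 ω ∈ B ∧ S0 ω = s₀} ∩ {ω | X ω = x ∧ S1 ω = 0})
          * μ {ω | X ω = x ∧ S1 ω = 0}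
        = μ ({ω | Y1 ω ∈ B} ∩ {ω | X ω = x ∧ S1 ω = 0})
          * μ ({ω | S0 ω = s₀} ∩ {ω | X ω = x ∧ S1 ω = 0})) :
    ∀ x : ℕ,
      0 < Pr μ {ω | S0 ω = 1 ∧ S1 ω = 0 ∧ X ω = x} →
      0 < Pr μ {ω | Z ω = 1 ∧ S ω = 0 ∧ X ω = x} →
      cexp μ Y1 {ω | S0 ω = 1 ∧ S1 ω = 0 ∧ X ω = x}
        = cexp μ Y {ω | Z ω = 1 ∧ S ω = 0 ∧ X ω = x} := by
  intro x hL hE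
  set V : Ω → ℕ × ℝ × ℝ := fun ω => (X ω, S1 ω, Y1 ω)
  set T : Set (ℕ × ℝ × ℝ) := {p | p.1 = x ∧ p.2.1 = 0}
  set A : Set Ω := V ⁻¹' T
  have hVm : Measurable V := by fun_prop
  have hT : MeasurableSet T := by measurability
  have hVind : IndepFun Z V μ :=
    hindep.comp (φ := id) (ψ := fun p : ℕ × ℝ × ℝ × ℝ × ℝ => (p.1, p.2.2.1, p.2.2.2.2))
      measurable_id (by fun_prop)
  have hLeq : {ω | S0 ω = 1 ∧ S1 ω = 0 ∧ X ω = x} = S0 ⁻¹' {1} ∩ A := by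
    ext ω; simp [A, V, T, and_comm]
  have hEeq : {ω | Z ω = 1 ∧ S ω = 0 ∧ X ω = x} = Z ⁻¹' {1} ∩ A := by
    ext ω; by_cases hz : Z ω = 1 <;> simp [hconsS, hz, A, V, T, and_comm]
  rw [hLeq] at hL ⊢
  rw [hEeq] at hE ⊢
  have hA0 : Pr μ A ≠ 0 := (hL.trans_le (measureReal_mono inter_subset_right)).ne'
  have hZ0 : Pr μ (Z ⁻¹' {1}) ≠ 0 := fun h => hE.ne' (measureReal_mono_null inter_subset_left h)
  calc cexp μ Y1 (S0 ⁻¹' {1} ∩ A)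
      = cexp μ Y1 A := cexp_eq_of_forall_measure_inter_preimage_mul_eq hY1m hL.ne' hA0
        fun B hB => by rw [← inter_assoc]; exact hPPI x B hB 1
    _ = cexp μ ((fun p => p.2.2) ∘ V) (Z ⁻¹' {1} ∩ A) :=
        (cexp_comp_inter_preimage_of_indepFun hVind hZm hVm (measurableSet_singleton 1) hT
          measurable_snd.snd hZ0).symm
    _ = cexp μ Y (Z ⁻¹' {1} ∩ A) :=
        cexp_congr_fun_s8 ((hZm (measurableSet_singleton 1)).inter (hVm hT))
          fun ω hω => by simp [hconsY, show Z ω = 1 from hω.1, V]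

/-- Identification of the Protected-stratum conditional mean via partial principal
ignorability: `E[Y(1) | S(0)=1, S(1)=0, X=x] = E[Y | Z=1, S=0, X=x]`. -/
theorem id_protected_mean_PPI
    {Ω : Type*} [MeasurableSpace Ω] (μ : Measure Ω) [IsProbabilityMeasure μ]
    (X : Ω → ℕ) (Z S0 S1 Y0 Y1 S Y : Ω → ℝ)
    (hXm : Measurable X) (hZm : Measurable Z)
    (hS0m : Measurable S0) (hS1m : Measurable S1)
    (hY0m : Measurable Y0) (hY1m : Measurable Y1)
    (hZ : ∀ ω, Z ω = 0 ∨ Z ω = 1)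
    (hS0 : ∀ ω, S0 ω = 0 ∨ S0 ω = 1) (hS1 : ∀ ω, S1 ω = 0 ∨ S1 ω = 1)
    (hindep : IndepFun Z (fun ω => (X ω, S0 ω, S1 ω, Y0 ω, Y1 ω)) μ)
    (hconsS : ∀ ω, S ω = if Z ω = 1 then S1 ω else S0 ω)
    (hconsY : ∀ ω, Y ω = if Z ω = 1 then Y1 ω else Y0 ω)
    (hmono : ∀ᵐ ω ∂μ, S1 ω ≤ S0 ω)
    (hint : Integrable Y1 μ)
    -- partial principal ignorability: Y(1) ⫫ S(0) given (X = x, S(1) = 0)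
    (hPPI : ∀ (x : ℕ) (B : Set ℝ), MeasurableSet B → ∀ s₀ : ℝ,
      μ ({ω | Y1 ω ∈ B ∧ S0 ω = s₀} ∩ {ω | X ω = x ∧ S1 ω = 0})
          * μ {ω | X ω = x ∧ S1 ω = 0}
        = μ ({ω | Y1 ω ∈ B} ∩ {ω | X ω = x ∧ S1 ω = 0})
          * μ ({ω | S0 ω = s₀} ∩ {ω | X ω = x ∧ S1 ω = 0})) :
    ∀ x : ℕ,
      0 < Pr μ {ω | S0 ω = 1 ∧ S1 ω = 0 ∧ X ω = x} →
      0 < Pr μ {ω | Z ω = 1 ∧ S ω = 0 ∧ X ω = x} →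
      cexp μ Y1 {ω | S0 ω = 1 ∧ S1 ω = 0 ∧ X ω = x}
        = cexp μ Y {ω | Z ω = 1 ∧ S ω = 0 ∧ X ω = x} :=
  id_protected_mean_PPI_general μ X Z S0 S1 Y0 Y1 S Y hXm hZm hS1m hY1m hindep hconsS hconsY hPPI
end
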